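/- Let S ⊆ ℝⁿ be a centrally symmetric convex body in John position, i.e. B₂ⁿ ⊆ S ⊆ √n·B₂ⁿ. Then for every ξ ∈ ∂S and every δ with 0 ≤ δ ≤ δ_n (a dimensional constant), the convex floating body S_δ satisfies ‖ξ_δ‖/‖ξ‖ ≥ 1 − √n·(n|B₂ⁿ|_n/|B₂^{n−1}|_{n−1})^{1/n}·δ^{1/n}, where ξ_δ is the intersection of ∂S_δ with the segment [0,ξ]. Consequently d(S_δ, S) ≤ 1 + G_n δ^{1/n} for a constant G_n depending only on n. -/

import Mathlib

open MeasureTheory Pointwise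

noncomputable def dBM {n : ℕ} (S₁ S₂ : Set (EuclideanSpace ℝ (Fin n))) : ℝ :=
  sInf {a : ℝ | 1 ≤ a ∧ a⁻¹ • S₁ ⊆ S₂ ∧ S₂ ⊆ a • S₁}

/-- The convex floating body: intersection of all halfspaces whose complement cuts off
at most `δ` times the volume of `S`. -/
noncomputable def floatingBody {n : ℕ} (S : Set (EuclideanSpace ℝ (Fin n))) (δ : ℝ) :
    Set (EuclideanSpace ℝ (Fin n)) :=
  {x | ∀ (y : EuclideanSpace ℝ (Fin n)) (c : ℝ),
    volume (S ∩ {z | c ≤ (inner ℝ z y : ℝ)}) ≤ ENNReal.ofReal δ * volume S → (inner ℝ x y : ℝ) ≤ c}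

open Metric Set



lemma coneSlice_vol (k : ℕ) (h s : ℝ) (hh : 0 < h) (hs1 : s ≤ 1)
    (q₀ : EuclideanSpace ℝ (Fin k)) :
    (volume.prod volume) {x : ℝ × EuclideanSpace ℝ (Fin k) |
        x.1 ∈ Set.Icc (s*h) h ∧ ‖x.2 - (x.1/h) • q₀‖ ≤ 1 - x.1/h}
      = ENNReal.ofReal (h * (1-s)^(k+1) / (k+1)) *
          volume (Metric.closedBall (0:EuclideanSpace ℝ (Fin k)) 1) := by
  set C : Set (ℝ × EuclideanSpace ℝ (Fin k)) :=
    {x | x.1 ∈ Set.Icc (s*h) h ∧ ‖x.2 - (x.1/h) • q₀‖ ≤ 1 - x.1/h} with hCdef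
  have hC : MeasurableSet C := by
    have h1 : IsClosed {x : ℝ × EuclideanSpace ℝ (Fin k) | x.1 ∈ Set.Icc (s*h) h} :=
      isClosed_Icc.preimage continuous_fst
    have h2 : IsClosed {x : ℝ × EuclideanSpace ℝ (Fin k) | ‖x.2 - (x.1/h) • q₀‖ ≤ 1 - x.1/h} := by
      apply isClosed_le
      · exact (continuous_snd.sub ((continuous_fst.div_const h).smul continuous_const)).norm
      · exact continuous_const.sub (continuous_fst.div_const h)
    exact (h1.inter h2).measurableSet
  rw [Measure.prod_apply hC]
  have slice : ∀ ζ : ℝ, volume (Prod.mk ζ ⁻¹' C) =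
      Set.indicator (Set.Icc (s*h) h) (fun ζ => ENNReal.ofReal ((1-ζ/h)^k)) ζ *
        volume (Metric.closedBall (0:EuclideanSpace ℝ (Fin k)) 1) := by
    intro ζ
    by_cases hζ : ζ ∈ Set.Icc (s*h) h
    · have hpre : Prod.mk ζ ⁻¹' C = Metric.closedBall ((ζ/h) • q₀) (1 - ζ/h) := by
        ext v
        simp only [C, Set.mem_preimage, Set.mem_setOf_eq, Metric.mem_closedBall,
          dist_eq_norm, hζ, true_and]
      have hr : (0:ℝ) ≤ 1 - ζ/h := by
        have : ζ/h ≤ 1 := (div_le_one hh).2 hζ.2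
        linarith
      rw [hpre, Measure.addHaar_closedBall' _ _ hr, Set.indicator_of_mem hζ,
        finrank_euclideanSpace_fin]
    · have hpre : Prod.mk ζ ⁻¹' C = ∅ := by
        ext v
        simp only [C, Set.mem_preimage, Set.mem_setOf_eq, Set.mem_empty_iff_false, iff_false]
        intro hmem
        exact hζ hmem.1
      rw [hpre, Set.indicator_of_notMem hζ, measure_empty, zero_mul]
  rw [lintegral_congr slice]
  have hmeas : Measurable fun ζ : ℝ => ENNReal.ofReal ((1-ζ/h)^k) := by fun_prop
  rw [lintegral_mul_const _ (hmeas.indicator measurableSet_Icc)]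
  congr 1
  rw [lintegral_indicator measurableSet_Icc]
  have hle : s*h ≤ h := by nlinarith
  have hint : IntegrableOn (fun ζ : ℝ => (1-ζ/h)^k) (Set.Icc (s*h) h) volume :=
    ((continuous_const.sub (continuous_id.div_const h)).pow k).integrableOn_Icc
  have hnn : 0 ≤ᵐ[volume.restrict (Set.Icc (s*h) h)] fun ζ : ℝ => (1-ζ/h)^k := by
    refine (ae_restrict_iff' measurableSet_Icc).2 (Filter.Eventually.of_forall fun ζ hζ => ?_)
    have : ζ/h ≤ 1 := (div_le_one hh).2 hζ.2
    exact pow_nonneg (by linarith) k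
  rw [← ofReal_integral_eq_lintegral_ofReal hint hnn]
  congr 1
  rw [MeasureTheory.integral_Icc_eq_integral_Ioc, ← intervalIntegral.integral_of_le hle]
  have hrw : ∀ ζ : ℝ, (1-ζ/h)^k = (h - ζ)^k * (h⁻¹)^k := by
    intro ζ
    rw [← mul_pow]
    congr 1
    field_simp
  simp_rw [hrw]
  rw [intervalIntegral.integral_mul_const]
  have := intervalIntegral.integral_comp_sub_left (a := s*h) (b := h) (fun t : ℝ => t^k) h
  rw [this, sub_self, integral_pow]
  have hne : h ≠ 0 := hh.ne'
  have : h - s*h = h*(1-s) := by ring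
  rw [this, zero_pow (by omega), mul_pow]
  field_simp
  have hk : h ^ k * h⁻¹ ^ k = 1 := by rw [← mul_pow, mul_inv_cancel₀ hne, one_pow]
  linear_combination (h * (1-s)^k - h*s*(1-s)^k) * hk


lemma mem_floatingBody (k : ℕ) (S : Set (EuclideanSpace ℝ (Fin (k+1))))
    (hScpt : IsCompact S) (hSconv : Convex ℝ S)
    (hball : Metric.closedBall (0:EuclideanSpace ℝ (Fin (k+1))) 1 ⊆ S)
    (δ : ℝ) (w : EuclideanSpace ℝ (Fin (k+1))) (hw : w ∈ S)
    (s : ℝ) (hs0 : 0 ≤ s) (hs1 : s ≤ 1)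
    (hvol : ENNReal.ofReal δ * volume S <
      ENNReal.ofReal ((1-s)^(k+1)/(k+1)) *
        volume (Metric.closedBall (0:EuclideanSpace ℝ (Fin k)) 1)) :
    s • w ∈ floatingBody S δ := by
  intro y c hcap
  by_contra hcon
  push_neg at hcon
  -- hcon : c < inner (s • w) y
  have h0S : (0:EuclideanSpace ℝ (Fin (k+1))) ∈ S := hball (by simp)
  obtain ⟨u, hu1, huy⟩ : ∃ u : EuclideanSpace ℝ (Fin (k+1)), ‖u‖ = 1 ∧
      (y ≠ 0 → u = ‖y‖⁻¹ • y) := by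
    by_cases hy : y = 0
    · refine ⟨EuclideanSpace.single 0 1, ?_, fun h => absurd hy h⟩
      simp [EuclideanSpace.norm_single]
    · exact ⟨‖y‖⁻¹ • y, norm_smul_inv_norm hy, fun _ => rfl⟩
  -- the maximum of ⟪u, ·⟫ on S
  obtain ⟨p, hpS, hpmax⟩ := hScpt.exists_isMaxOn ⟨0, h0S⟩
    ((continuous_const.inner continuous_id).continuousOn :
      ContinuousOn (fun z : EuclideanSpace ℝ (Fin (k+1)) => (inner ℝ u z : ℝ)) S)
  have hpmax' : ∀ z ∈ S, (inner ℝ u z : ℝ) ≤ inner ℝ u p := fun z hz => hpmax hz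
  set h : ℝ := inner ℝ u p with hdef
  have huS : u ∈ S := hball (by simp [hu1])
  have hh1 : 1 ≤ h := by
    have := hpmax' u huS
    rw [real_inner_self_eq_norm_mul_norm, hu1] at this
    linarith
  have hh : 0 < h := by linarith
  -- orthonormal basis with b 0 = u
  have hortho : Orthonormal ℝ (Set.restrict {(0: Fin (k+1))} (fun _ => u)) := by
    constructor
    · intro i; exact hu1
    · intro i j hij
      exact absurd (Subtype.ext (by
        have hi := i.2; have hj := j.2
        simp only [Set.mem_singleton_iff] at hi hj
        rw [hi, hj])) hij
  obtain ⟨b, hb0⟩ := hortho.exists_orthonormalBasis_extension_of_card_eq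
    (by simp [finrank_euclideanSpace_fin])
  have hbu : b 0 = u := hb0 0 rfl
  have hrepr0 : ∀ z, b.repr z 0 = (inner ℝ u z : ℝ) := by
    intro z
    rw [b.repr_apply_apply, hbu]
  -- The measure preserving coordinate map
  set T : EuclideanSpace ℝ (Fin (k+1)) → ℝ × EuclideanSpace ℝ (Fin k) :=
    fun z => (b.repr z 0, (WithLp.equiv 2 (Fin k → ℝ)).symm fun i => b.repr z i.succ) with hT
  have hTmp : MeasurePreserving T volume (volume.prod volume) := by
    have m1 := b.measurePreserving_repr
    have m2 := EuclideanSpace.volume_preserving_symm_measurableEquiv_toLp (Fin (k+1))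
    have m3 := MeasureTheory.volume_preserving_piFinSuccAbove (fun _ : Fin (k+1) => ℝ) 0
    have m4 := (MeasurePreserving.id
      (volume : Measure ℝ)).prod (EuclideanSpace.volume_preserving_symm_measurableEquiv_toLp (Fin k)).symm
    have hcomp := (m4.comp m3).comp (m2.comp m1)
    have hfun : (Prod.map id (MeasurableEquiv.toLp 2 (Fin k → ℝ))) ∘
        (MeasurableEquiv.piFinSuccAbove (fun _ : Fin (k+1) => ℝ) 0) ∘
        ((MeasurableEquiv.toLp 2 (Fin (k+1) → ℝ)).symm ∘ b.repr) = T := by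
      funext z
      simp only [Function.comp_apply, T, Prod.map]
      congr 1
    have : MeasurePreserving ((Prod.map id (MeasurableEquiv.toLp 2 (Fin k → ℝ))) ∘
        (MeasurableEquiv.piFinSuccAbove (fun _ : Fin (k+1) => ℝ) 0) ∘
        ((MeasurableEquiv.toLp 2 (Fin (k+1) → ℝ)).symm ∘ b.repr)) volume (volume.prod volume) := by
      have := hcomp
      simpa [Function.comp_assoc, Measure.volume_eq_prod] using this
    rwa [hfun] at this
  -- coordinate facts
  have fact2 : ∀ z : EuclideanSpace ℝ (Fin (k+1)), b.repr z 0 = 0 → ‖z‖ = ‖(T z).2‖ := by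
    intro z hz
    rw [← b.repr.norm_map z, EuclideanSpace.norm_eq, EuclideanSpace.norm_eq]
    congr 1
    rw [Fin.sum_univ_succ, hz]
    simp [T, WithLp.equiv_symm_apply]
  have fact3 : ∀ (z₁ z₂ : EuclideanSpace ℝ (Fin (k+1))) (a : ℝ),
      (T (z₁ - a • z₂)).2 = (T z₁).2 - a • (T z₂).2 := by
    intro z₁ z₂ a
    ext i
    simp [T, WithLp.equiv_symm_apply, PiLp.sub_apply, PiLp.smul_apply, _root_.map_sub,
      _root_.map_smul, smul_eq_mul]
  set q₀ : EuclideanSpace ℝ (Fin k) := (T p).2 with hq₀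
  set C : Set (ℝ × EuclideanSpace ℝ (Fin k)) :=
    {x | x.1 ∈ Set.Icc (s*h) h ∧ ‖x.2 - (x.1/h) • q₀‖ ≤ 1 - x.1/h} with hCdef
  have hCclosed : IsClosed C := by
    have h1 : IsClosed {x : ℝ × EuclideanSpace ℝ (Fin k) | x.1 ∈ Set.Icc (s*h) h} :=
      isClosed_Icc.preimage continuous_fst
    have h2 : IsClosed {x : ℝ × EuclideanSpace ℝ (Fin k) | ‖x.2 - (x.1/h) • q₀‖ ≤ 1 - x.1/h} := by
      apply isClosed_le
      · exact (continuous_snd.sub ((continuous_fst.div_const h).smul continuous_const)).norm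
      · exact continuous_const.sub (continuous_fst.div_const h)
    exact h1.inter h2
  have hsubset : T ⁻¹' C ⊆ S ∩ {z | c ≤ (inner ℝ z y : ℝ)} := by
    rintro z ⟨hz1, hz2⟩
    have hζ : (T z).1 = (inner ℝ u z : ℝ) := hrepr0 z
    set τ : ℝ := (T z).1 / h with hτdef
    have hτs : s ≤ τ := by
      rw [hτdef, le_div_iff₀ hh]
      exact hz1.1
    have hτ1 : τ ≤ 1 := by
      rw [hτdef, div_le_one hh]
      exact hz1.2
    have hτ0 : 0 ≤ τ := le_trans hs0 hτs
    have hinner : (inner ℝ u z : ℝ) = τ * h := by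
      rw [← hζ, hτdef, div_mul_cancel₀ _ hh.ne']
    have hr0 : b.repr (z - τ • p) 0 = 0 := by
      have : b.repr (z - τ • p) 0 = b.repr z 0 - τ * b.repr p 0 := by
        simp [_root_.map_sub, _root_.map_smul, PiLp.sub_apply, PiLp.smul_apply, smul_eq_mul]
      rw [this, hrepr0, hrepr0, hinner, ← hdef]
      ring
    have hrnorm : ‖z - τ • p‖ ≤ 1 - τ := by
      rw [fact2 _ hr0, fact3]
      exact hz2
    have hzS : z ∈ S := by
      rcases eq_or_lt_of_le hτ1 with hτe | hτlt
      · have hzero : ‖z - τ • p‖ ≤ 0 := by rw [← hτe] at hrnorm; simpa using hrnorm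
        have : z = τ • p := by
          have := le_antisymm hzero (norm_nonneg _)
          rw [norm_eq_zero, sub_eq_zero] at this
          exact this
        rw [this, hτe, one_smul]
        exact hpS
      · set d : EuclideanSpace ℝ (Fin (k+1)) := (1 - τ)⁻¹ • (z - τ • p) with hd
        have h1τ : (0:ℝ) < 1 - τ := by linarith
        have hdball : d ∈ Metric.closedBall (0:EuclideanSpace ℝ (Fin (k+1))) 1 := by
          rw [mem_closedBall_zero_iff, hd, norm_smul, Real.norm_eq_abs,
            abs_of_pos (inv_pos.2 h1τ), inv_mul_le_iff₀ h1τ, mul_one]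
          exact hrnorm
        have hmem := hSconv hpS (hball hdball) hτ0 h1τ.le (show τ + (1-τ) = 1 by ring)
        have : τ • p + (1 - τ) • d = z := by
          rw [hd, smul_inv_smul₀ (ne_of_gt h1τ)]
          abel
        rwa [this] at hmem
    refine ⟨hzS, ?_⟩
    show c ≤ (inner ℝ z y : ℝ)
    by_cases hy : y = 0
    · subst hy
      rw [inner_zero_right] at hcon ⊢
      linarith
    · have hyu := huy hy
      have hy0 : (0:ℝ) < ‖y‖ := norm_pos_iff.2 hy
      have hiuv : ∀ v : EuclideanSpace ℝ (Fin (k+1)),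
          (inner ℝ v y : ℝ) = ‖y‖ * (inner ℝ u v : ℝ) := by
        intro v
        have huv : (inner ℝ u v : ℝ) = ‖y‖⁻¹ * (inner ℝ y v : ℝ) := by
          rw [hyu, real_inner_smul_left]
        rw [huv, real_inner_comm v y]
        field_simp
      have hwu : (inner ℝ u w : ℝ) ≤ h := hpmax' w hw
      have hcon' : c < s * (‖y‖ * (inner ℝ u w : ℝ)) := by
        rw [real_inner_smul_left, hiuv w] at hcon
        exact hcon
      have e1 : ‖y‖ * (inner ℝ u w : ℝ) ≤ ‖y‖ * h := mul_le_mul_of_nonneg_left hwu hy0.le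
      have e2 : s * (‖y‖ * (inner ℝ u w : ℝ)) ≤ s * (‖y‖ * h) := mul_le_mul_of_nonneg_left e1 hs0
      have e3 : s * (‖y‖ * h) ≤ τ * (‖y‖ * h) :=
        mul_le_mul_of_nonneg_right hτs (by positivity)
      rw [hiuv z, hinner]
      nlinarith
  have hWvol : volume (T ⁻¹' C) = ENNReal.ofReal (h*(1-s)^(k+1)/(k+1)) *
      volume (Metric.closedBall (0:EuclideanSpace ℝ (Fin k)) 1) := by
    rw [hTmp.measure_preimage hCclosed.measurableSet.nullMeasurableSet]
    exact coneSlice_vol k h s hh hs1 q₀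
  have hmono : ENNReal.ofReal ((1-s)^(k+1)/(k+1)) *
      volume (Metric.closedBall (0:EuclideanSpace ℝ (Fin k)) 1) ≤ volume (T ⁻¹' C) := by
    rw [hWvol]
    apply mul_le_mul_left
    apply ENNReal.ofReal_le_ofReal
    have hnn : (0:ℝ) ≤ (1-s)^(k+1) := pow_nonneg (by linarith) _
    have hk1 : (0:ℝ) < (k:ℝ)+1 := by positivity
    have hX : (1-s)^(k+1) ≤ h * (1-s)^(k+1) := le_mul_of_one_le_left hnn hh1
    exact div_le_div_of_nonneg_right hX hk1.le
  exact absurd ((hvol.trans_le hmono).trans_le ((measure_mono hsubset).trans hcap)) (lt_irrefl _)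



lemma floatingBody_convex {n : ℕ} (S : Set (EuclideanSpace ℝ (Fin n))) (δ : ℝ) :
    Convex ℝ (floatingBody S δ) := by
  intro x hx z hz a b ha hb hab y c hyc
  have h1 := hx y c hyc
  have h2 := hz y c hyc
  have he : (inner ℝ (a•x + b•z) y : ℝ) = a * (inner ℝ x y : ℝ) + b * (inner ℝ z y : ℝ) := by
    rw [inner_add_left, real_inner_smul_left, real_inner_smul_left]
  rw [he]
  have h3 : a*c + b*c = c := by rw [← add_mul, hab, one_mul]
  nlinarith [mul_le_mul_of_nonneg_left h1 ha, mul_le_mul_of_nonneg_left h2 hb]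

lemma floatingBody_subset {n : ℕ} (S : Set (EuclideanSpace ℝ (Fin n)))
    (hcl : IsClosed S) (hconv : Convex ℝ S) (δ : ℝ) :
    floatingBody S δ ⊆ S := by
  intro x hx
  by_contra hxS
  obtain ⟨f, cc, hfa, hfx⟩ := geometric_hahn_banach_closed_point hconv hcl hxS
  set y := (InnerProductSpace.toDual ℝ (EuclideanSpace ℝ (Fin n))).symm f with hy
  have hyz : ∀ z, (inner ℝ z y : ℝ) = f z := by
    intro z
    rw [real_inner_comm]
    exact InnerProductSpace.toDual_symm_apply
  have hempty : S ∩ {z | cc ≤ (inner ℝ z y : ℝ)} = ∅ := by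
    ext z
    simp only [Set.mem_inter_iff, Set.mem_setOf_eq, Set.mem_empty_iff_false, iff_false, not_and,
      not_le]
    intro hz
    rw [hyz]
    exact hfa z hz
  have := hx y cc (by rw [hempty]; simp)
  rw [hyz] at this
  linarith

theorem stmt15 (n : ℕ) (hn : 2 ≤ n) :
    ∃ δn > (0:ℝ), ∃ Gn > (0:ℝ),
      ∀ S : Set (EuclideanSpace ℝ (Fin n)),
        IsCompact S → Convex ℝ S → S = -S →
        Metric.closedBall (0:EuclideanSpace ℝ (Fin n)) 1 ⊆ S →
        S ⊆ Metric.closedBall (0:EuclideanSpace ℝ (Fin n)) (Real.sqrt n) →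
        ∀ δ : ℝ, 0 ≤ δ → δ ≤ δn →
          (∀ ξ ∈ frontier S, ∀ ξδ ∈ frontier (floatingBody S δ) ∩ segment ℝ 0 ξ,
            1 - Real.sqrt n *
              ((n * (volume (Metric.closedBall (0:EuclideanSpace ℝ (Fin n)) 1)).toReal /
                (volume (Metric.closedBall (0:EuclideanSpace ℝ (Fin (n - 1))) 1)).toReal) ^
                  ((1:ℝ) / n)) * δ ^ ((1:ℝ) / n) ≤ ‖ξδ‖ / ‖ξ‖) ∧
          dBM (floatingBody S δ) S ≤ 1 + Gn * δ ^ ((1:ℝ) / n) := by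
  obtain ⟨k, rfl⟩ : ∃ k, n = k + 1 := ⟨n - 1, by omega⟩
  set ωn : ℝ := (volume (Metric.closedBall (0:EuclideanSpace ℝ (Fin (k+1))) 1)).toReal with hωn
  set ωk : ℝ := (volume (Metric.closedBall (0:EuclideanSpace ℝ (Fin k)) 1)).toReal with hωk
  have hωn_fin : volume (Metric.closedBall (0:EuclideanSpace ℝ (Fin (k+1))) 1) ≠ ⊤ :=
    measure_closedBall_lt_top.ne
  have hωk_fin : volume (Metric.closedBall (0:EuclideanSpace ℝ (Fin k)) 1) ≠ ⊤ :=
    measure_closedBall_lt_top.ne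
  have hωn_pos0 : 0 < volume (Metric.closedBall (0:EuclideanSpace ℝ (Fin (k+1))) 1) :=
    lt_of_lt_of_le (measure_ball_pos _ _ one_pos) (measure_mono Metric.ball_subset_closedBall)
  have hωk_pos0 : 0 < volume (Metric.closedBall (0:EuclideanSpace ℝ (Fin k)) 1) :=
    lt_of_lt_of_le (measure_ball_pos _ _ one_pos) (measure_mono Metric.ball_subset_closedBall)
  have hωn_pos : 0 < ωn := ENNReal.toReal_pos hωn_pos0.ne' hωn_fin
  have hωk_pos : 0 < ωk := ENNReal.toReal_pos hωk_pos0.ne' hωk_fin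
  have hNR : (0:ℝ) < ((k+1:ℕ):ℝ) := by positivity
  set C : ℝ := Real.sqrt ((k+1:ℕ):ℝ) *
      ((((k+1:ℕ):ℝ) * ωn / ωk) ^ ((1:ℝ)/((k+1:ℕ):ℝ))) with hCdef
  have hXpos : (0:ℝ) < ((k+1:ℕ):ℝ) * ωn / ωk := div_pos (mul_pos hNR hωn_pos) hωk_pos
  have hCpos : 0 < C :=
    mul_pos (Real.sqrt_pos.2 hNR) (Real.rpow_pos_of_pos hXpos _)
  refine ⟨(1/(4*C))^(k+1), by positivity, 4*C, by positivity, ?_⟩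
  intro S hcpt hconv hsymm hball hsub δ hδ0 hδle
  have hS0 : (0:EuclideanSpace ℝ (Fin (k+1))) ∈ S := hball (by simp)
  set ε : ℝ := C * δ ^ ((1:ℝ)/((k+1:ℕ):ℝ)) with hεdef
  have hδe0 : 0 ≤ δ ^ ((1:ℝ)/((k+1:ℕ):ℝ)) := Real.rpow_nonneg hδ0 _
  have hε0 : 0 ≤ ε := mul_nonneg hCpos.le hδe0
  have hεle : ε ≤ 1/4 := by
    have h1 : δ ^ ((1:ℝ)/((k+1:ℕ):ℝ)) ≤ ((1/(4*C))^(k+1)) ^ ((1:ℝ)/((k+1:ℕ):ℝ)) :=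
      Real.rpow_le_rpow hδ0 hδle (by positivity)
    have h2 : ((1/(4*C))^(k+1) : ℝ) ^ ((1:ℝ)/((k+1:ℕ):ℝ)) = 1/(4*C) := by
      rw [one_div ((k+1:ℕ):ℝ)]
      exact Real.pow_rpow_inv_natCast (by positivity) (by omega)
    rw [hεdef]
    calc C * δ ^ ((1:ℝ)/((k+1:ℕ):ℝ)) ≤ C * (1/(4*C)) := by
          rw [← h2]; exact mul_le_mul_of_nonneg_left h1 hCpos.le
      _ = 1/4 := by field_simp
  -- the key volume comparison
  have bridge : ∀ s : ℝ, 0 ≤ s → s ≤ 1 → ε < 1 - s →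
      ENNReal.ofReal δ * volume S <
        ENNReal.ofReal ((1-s)^(k+1)/((k+1:ℕ):ℝ)) *
          volume (Metric.closedBall (0:EuclideanSpace ℝ (Fin k)) 1) := by
    intro s hs0 hs1 hεs
    have hs1' : (0:ℝ) < 1 - s := lt_of_le_of_lt hε0 hεs
    have hpow : ε^(k+1) < (1-s)^(k+1) := pow_lt_pow_left₀ hεs hε0 (by omega)
    have hεk : ε^(k+1) = (Real.sqrt ((k+1:ℕ):ℝ))^(k+1) * (((k+1:ℕ):ℝ) * ωn / ωk) * δ := by
      rw [hεdef, hCdef, mul_pow, mul_pow]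
      rw [one_div ((k+1:ℕ):ℝ)]
      rw [Real.rpow_inv_natCast_pow hXpos.le (by omega),
        Real.rpow_inv_natCast_pow hδ0 (by omega)]
    have key : δ * ((Real.sqrt ((k+1:ℕ):ℝ))^(k+1) * ωn) < (1-s)^(k+1)/((k+1:ℕ):ℝ) * ωk := by
      rw [hεk] at hpow
      have hmul := mul_lt_mul_of_pos_right hpow
        (show (0:ℝ) < ωk/((k+1:ℕ):ℝ) from div_pos hωk_pos hNR)
      calc δ * ((Real.sqrt ((k+1:ℕ):ℝ))^(k+1) * ωn)
          = ((Real.sqrt ((k+1:ℕ):ℝ))^(k+1) * (((k+1:ℕ):ℝ) * ωn / ωk) * δ) *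
              (ωk/((k+1:ℕ):ℝ)) := by field_simp
        _ < (1-s)^(k+1) * (ωk/((k+1:ℕ):ℝ)) := hmul
        _ = (1-s)^(k+1)/((k+1:ℕ):ℝ) * ωk := by ring
    have hvolS : volume S ≤ ENNReal.ofReal ((Real.sqrt ((k+1:ℕ):ℝ))^(k+1) * ωn) := by
      calc volume S
          ≤ volume (Metric.closedBall (0:EuclideanSpace ℝ (Fin (k+1)))
              (Real.sqrt ((k+1:ℕ):ℝ))) := measure_mono hsub
        _ = ENNReal.ofReal ((Real.sqrt ((k+1:ℕ):ℝ)) ^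
              (Module.finrank ℝ (EuclideanSpace ℝ (Fin (k+1))))) *
              volume (Metric.closedBall (0:EuclideanSpace ℝ (Fin (k+1))) 1) :=
            Measure.addHaar_closedBall' _ _ (Real.sqrt_nonneg _)
        _ = ENNReal.ofReal ((Real.sqrt ((k+1:ℕ):ℝ))^(k+1) * ωn) := by
            rw [finrank_euclideanSpace_fin, hωn, ENNReal.ofReal_mul (by positivity),
              ENNReal.ofReal_toReal hωn_fin]
    calc ENNReal.ofReal δ * volume S
        ≤ ENNReal.ofReal δ * ENNReal.ofReal ((Real.sqrt ((k+1:ℕ):ℝ))^(k+1) * ωn) :=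
          mul_le_mul_right hvolS _
      _ = ENNReal.ofReal (δ * ((Real.sqrt ((k+1:ℕ):ℝ))^(k+1) * ωn)) :=
          (ENNReal.ofReal_mul hδ0).symm
      _ < ENNReal.ofReal ((1-s)^(k+1)/((k+1:ℕ):ℝ) * ωk) :=
          (ENNReal.ofReal_lt_ofReal_iff
            (mul_pos (div_pos (pow_pos hs1' _) hNR) hωk_pos)).2 key
      _ = ENNReal.ofReal ((1-s)^(k+1)/((k+1:ℕ):ℝ)) *
            volume (Metric.closedBall (0:EuclideanSpace ℝ (Fin k)) 1) := by
          rw [ENNReal.ofReal_mul (div_nonneg (pow_nonneg hs1'.le _) hNR.le), hωk,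
            ENNReal.ofReal_toReal hωk_fin]
  have memFB : ∀ (s : ℝ) (w : EuclideanSpace ℝ (Fin (k+1))), w ∈ S → 0 ≤ s → s ≤ 1 →
      ε < 1 - s → s • w ∈ floatingBody S δ := fun s w hw h1 h2 h3 =>
    mem_floatingBody k S hcpt hconv hball δ w hw s h1 h2 (by
      have := bridge s h1 h2 h3
      convert this using 3
      push_cast
      ring)
  have hball_fb : Metric.closedBall (0:EuclideanSpace ℝ (Fin (k+1))) (1/2) ⊆
      floatingBody S δ := by
    intro z hz
    have hzS : (2:ℝ) • z ∈ S := by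
      apply hball
      rw [Metric.mem_closedBall, dist_zero_right] at hz ⊢
      rw [norm_smul, Real.norm_eq_abs, abs_of_nonneg (by norm_num : (0:ℝ) ≤ 2)]
      linarith
    have heq : z = (1/2 : ℝ) • ((2:ℝ) • z) := by rw [smul_smul]; norm_num
    rw [heq]
    exact memFB (1/2) _ hzS (by norm_num) (by norm_num) (by linarith)
  have hint0 : (0:EuclideanSpace ℝ (Fin (k+1))) ∈ interior (floatingBody S δ) :=
    mem_interior_iff_mem_nhds.2
      (Filter.mem_of_superset (Metric.closedBall_mem_nhds 0 (by norm_num)) hball_fb)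
  constructor
  · -- part 1
    intro ξ hξ ξδ hξδ
    obtain ⟨hfr, hseg⟩ := hξδ
    have hξS : ξ ∈ S := by
      rw [← hcpt.isClosed.closure_eq]
      exact frontier_subset_closure hξ
    have hξnorm : 1 ≤ ‖ξ‖ := by
      by_contra hlt
      push_neg at hlt
      have hmem : ξ ∈ interior S :=
        interior_maximal (Metric.ball_subset_closedBall.trans hball) Metric.isOpen_ball
          (mem_ball_zero_iff.2 hlt)
      exact hξ.2 hmem
    have hξne : ‖ξ‖ ≠ 0 := by linarith
    obtain ⟨a, bb, ha, hb, hab, hcomb⟩ := hseg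
    have hξδ_eq : ξδ = bb • ξ := by rw [← hcomb, smul_zero, zero_add]
    have hratio : ‖ξδ‖ / ‖ξ‖ = bb := by
      rw [hξδ_eq, norm_smul, Real.norm_eq_abs, abs_of_nonneg hb, mul_div_assoc,
        div_self hξne, mul_one]
    rw [hratio]
    show 1 - ε ≤ bb
    by_contra hlt
    push_neg at hlt
    rcases eq_or_lt_of_le hb with hb0 | hbpos
    · have h0 : ξδ = 0 := by rw [hξδ_eq, ← hb0, zero_smul]
      exact hfr.2 (h0 ▸ hint0)
    · set t' : ℝ := (bb + (1 - ε))/2 with ht'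
      have h1 : bb < t' := by
        rw [ht']; linarith
      have h2 : t' < 1 - ε := by rw [ht']; linarith
      have ht'0 : 0 < t' := by rw [ht']; linarith
      have ht'1 : t' ≤ 1 := by linarith
      have hmem' : t' • ξ ∈ floatingBody S δ := memFB t' ξ hξS ht'0.le ht'1 (by linarith)
      have hopen : ξδ ∈ openSegment ℝ (0:EuclideanSpace ℝ (Fin (k+1))) (t' • ξ) := by
        refine ⟨1 - bb/t', bb/t', ?_, div_pos hbpos ht'0, by ring, ?_⟩
        · have hd1 : bb/t' < 1 := (div_lt_one ht'0).2 h1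
          linarith
        · rw [smul_zero, zero_add, smul_smul, div_mul_cancel₀ _ ht'0.ne', hξδ_eq]
      have hi := (floatingBody_convex S δ).openSegment_interior_closure_subset_interior
        hint0 (subset_closure hmem') hopen
      exact hfr.2 hi
  · -- part 2
    have hfbSub : floatingBody S δ ⊆ S := floatingBody_subset S hcpt.isClosed hconv δ
    have h2ε : (0:ℝ) < 1 - 2*ε := by linarith
    have hβprod : (1 - 2*ε) * (1 - 2*ε)⁻¹ = 1 := mul_inv_cancel₀ h2ε.ne'
    have hβpos : 0 < (1 - 2*ε)⁻¹ := inv_pos.2 h2ε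
    have hβ1 : 1 ≤ (1 - 2*ε)⁻¹ := by nlinarith
    have hmemA : ∀ a : ℝ, (1 - 2*ε)⁻¹ < a →
        a ∈ {a : ℝ | 1 ≤ a ∧ a⁻¹ • floatingBody S δ ⊆ S ∧ S ⊆ a • floatingBody S δ} := by
      intro a haβ
      have ha1 : 1 ≤ a := le_trans hβ1 haβ.le
      have ha0 : 0 < a := lt_of_lt_of_le one_pos ha1
      have hainv1 : a⁻¹ ≤ 1 := inv_le_one_of_one_le₀ ha1
      refine ⟨ha1, ?_, ?_⟩
      · rintro x ⟨v, hv, rfl⟩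
        exact hconv.smul_mem_of_zero_mem hS0 (hfbSub hv) ⟨inv_nonneg.2 ha0.le, hainv1⟩
      · intro x hx
        have hinv : a⁻¹ < 1 - 2*ε := by
          rw [inv_eq_one_div, div_lt_iff₀ ha0]
          nlinarith
        refine Set.mem_smul_set.2 ⟨a⁻¹ • x, ?_, smul_inv_smul₀ ha0.ne' x⟩
        exact memFB a⁻¹ x hx (inv_nonneg.2 ha0.le) hainv1 (by linarith)
    have hbdd : BddBelow {a : ℝ | 1 ≤ a ∧ a⁻¹ • floatingBody S δ ⊆ S ∧
        S ⊆ a • floatingBody S δ} := ⟨1, fun a ha => ha.1⟩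
    have hsinf : dBM (floatingBody S δ) S ≤ (1 - 2*ε)⁻¹ :=
      le_of_forall_gt_imp_ge_of_dense fun a haβ => csInf_le hbdd (hmemA a haβ)
    have hβle : (1 - 2*ε)⁻¹ ≤ 1 + 4*C * δ ^ ((1:ℝ)/((k+1:ℕ):ℝ)) := by
      have h4 : 4*C * δ ^ ((1:ℝ)/((k+1:ℕ):ℝ)) = 4*ε := by rw [hεdef]; ring
      rw [h4, inv_eq_one_div, div_le_iff₀ h2ε]
      nlinarith
    exact le_trans hsinf hβle
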